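/- Consider the warped product metric g = (dx² + dy²)/λ(t)² + dt² on N² × J with N² flat (K^N = 0), where λ(t) = t^{1/√2} (or t^{−1/√2}) on J = (0,∞). Then (N²×J, g) is a stationary Ricci soliton (A = 0) of non-constant sectional curvature, with soliton equations 0 = (ln λ)'' − 2((ln λ)')² − f (ln λ)' and 0 = f' + 2(ln λ)'' − 2((ln λ)')², solved by f given in (warped-product form). In particular, F(λ) = 2λ^{2(1±√2)} solves 2λ²FF'' − λF'(2F + λF') − 4F² = 0 corresponding to (λ')² = 2F(λ). -/

import Mathlib

open scoped BigOperators

noncomputable section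

/-- Partial derivative of `f` in the `i`-th coordinate direction. -/
def pd {n : ℕ} (f : (Fin n → ℝ) → ℝ) (i : Fin n) (x : Fin n → ℝ) : ℝ :=
  fderiv ℝ f x (Pi.single i 1)

/-- Pointwise inverse of a metric (the components `g^{ij}`). -/
def ginv {n : ℕ} (g : (Fin n → ℝ) → Matrix (Fin n) (Fin n) ℝ) (x : Fin n → ℝ) :
    Matrix (Fin n) (Fin n) ℝ := (g x)⁻¹

/-- Christoffel symbols `Γ^k_{ij}` of the metric `g`. -/
def christoffel {n : ℕ} (g : (Fin n → ℝ) → Matrix (Fin n) (Fin n) ℝ)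
    (k i j : Fin n) (x : Fin n → ℝ) : ℝ :=
  (1 / 2) * ∑ l, ginv g x k l *
    (pd (fun y => g y l j) i x + pd (fun y => g y l i) j x - pd (fun y => g y i j) l x)

/-- The Ricci tensor in coordinates:
`Ric_{ij} = ∂_k Γ^k_{ij} − ∂_i Γ^k_{kj} + Γ^k_{kl} Γ^l_{ij} − Γ^k_{il} Γ^l_{kj}`. -/
def ricci {n : ℕ} (g : (Fin n → ℝ) → Matrix (Fin n) (Fin n) ℝ)
    (i j : Fin n) (x : Fin n → ℝ) : ℝ :=
  (∑ k, pd (christoffel g k i j) k x) - (∑ k, pd (christoffel g k k j) i x)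
    + (∑ k, ∑ l, christoffel g k k l x * christoffel g l i j x)
    - ∑ k, ∑ l, christoffel g k i l x * christoffel g l k j x

/-- Lie derivative of the metric:
`(L_E g)_{ij} = E^k ∂_k g_{ij} + g_{kj} ∂_i E^k + g_{ik} ∂_j E^k`. -/
def lieD {n : ℕ} (g : (Fin n → ℝ) → Matrix (Fin n) (Fin n) ℝ)
    (E : (Fin n → ℝ) → Fin n → ℝ) (i j : Fin n) (x : Fin n → ℝ) : ℝ :=
  (∑ k, E x k * pd (fun y => g y i j) k x)
    + (∑ k, g x k j * pd (fun y => E y k) i x)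
    + ∑ k, g x i k * pd (fun y => E y k) j x

/-- The dual 1-form `E♭ = g(E,·)`. -/
def flat {n : ℕ} (g : (Fin n → ℝ) → Matrix (Fin n) (Fin n) ℝ)
    (E : (Fin n → ℝ) → Fin n → ℝ) (j : Fin n) (x : Fin n → ℝ) : ℝ :=
  ∑ k, g x j k * E x k

/-- The warping function `λ(t) = t^{e/√2}` (with `e = ±1`). -/
def lam13 (e t : ℝ) : ℝ := Real.rpow t (e / Real.sqrt 2)

/-- The warped product metric `g = (dx² + dy²)/λ(t)² + dt²` on `N² × (0,∞)`, `N²` flat. -/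
def g13 (e : ℝ) (x : Fin 3 → ℝ) : Matrix (Fin 3) (Fin 3) ℝ :=
  Matrix.diagonal ![1 / lam13 e (x 2) ^ 2, 1 / lam13 e (x 2) ^ 2, 1]

/-- `ln λ`. -/
def lnlam13 (e t : ℝ) : ℝ := Real.log (lam13 e t)

/-- The vertical component `f` of the soliton field, `f = λ''/λ' − 3λ'/λ`
(the case `A = K^N = 0` of the warped-product formula for `f`). -/
def f13 (e t : ℝ) : ℝ :=
  deriv (deriv (lam13 e)) t / deriv (lam13 e) t - 3 * deriv (lam13 e) t / lam13 e t

/-- The soliton field `E = f(t) ∂/∂t`. -/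
def E13 (e : ℝ) (x : Fin 3 → ℝ) : Fin 3 → ℝ := ![0, 0, f13 e (x 2)]

/-- `F(λ) = 2 λ^{2(1 ± √2)}`. -/
def F13 (e l : ℝ) : ℝ := 2 * Real.rpow l (2 * (1 + e * Real.sqrt 2))

/-!
Write `c = e/√2`, so that `g = φ(t)(dx² + dy²) + dt²` with `φ = 1/λ² = t^(-2c)`. For any metric
of this shape the Christoffel symbols are built from `P = φ'/(2φ)` and `Q = -φ'/2` alone, and the
Ricci tensor is `diag(Q', Q', -2P' - 2P²)`. For the power `φ = t^(-2c)` this gives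
`Ric = diag(-c(2c+1)φ/t², -c(2c+1)φ/t², -2c(c+1)/t²)`, while `E = f ∂_t` with
`f = -(2c+1)/t` has `L_E g = diag(fφ', fφ', 2f') = diag(2c(2c+1)φ/t², 2c(2c+1)φ/t², 2(2c+1)/t²)`.
The horizontal soliton equations thus hold for every `c`, and the vertical one is `4c² = 2`,
i.e. `e = ±1`. The two eigenvalues of `Ric` relative to `g` differ by `c/t²`, so `g` is not
Einstein. Finally, for `F = C l^p` the reduced ODE reads `C² l^(2p) (p² - 4p - 4) = 0`, whose
roots are `p = 2(1 ± √2)`.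
-/

open Filter Topology Matrix

section Coordinates

variable {n : ℕ}

theorem pd_congr {f g : (Fin n → ℝ) → ℝ} {x : Fin n → ℝ} (h : f =ᶠ[𝓝 x] g) (i : Fin n) :
    pd f i x = pd g i x := by
  rw [pd, pd, h.fderiv_eq]

theorem pd_const (c : ℝ) (i : Fin n) (x : Fin n → ℝ) : pd (fun _ => c) i x = 0 := by
  simp [pd]

theorem pd_comp_apply {h : ℝ → ℝ} {d : ℝ} {x : Fin n → ℝ} {m : Fin n}
    (hd : HasDerivAt h d (x m)) (i : Fin n) :
    pd (fun y => h (y m)) i x = if i = m then d else 0 := by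
  have hc : HasFDerivAt (fun y : Fin n → ℝ => h (y m)) (d • ContinuousLinearMap.proj m) x :=
    hd.comp_hasFDerivAt x
      (ContinuousLinearMap.proj (R := ℝ) (φ := fun _ : Fin n => ℝ) m).hasFDerivAt
  rw [pd, hc.fderiv]
  simp [Pi.single_apply, eq_comm]

theorem pd_of_eventuallyEq_comp {f : (Fin n → ℝ) → ℝ} {h : ℝ → ℝ} {d : ℝ} {x : Fin n → ℝ}
    {m : Fin n} (hf : f =ᶠ[𝓝 x] fun y => h (y m)) (hd : HasDerivAt h d (x m)) (i : Fin n) :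
    pd f i x = if i = m then d else 0 := by
  rw [pd_congr hf, pd_comp_apply hd]

end Coordinates

section WarpedMetric

def warpedMetric (φ : ℝ → ℝ) (y : Fin 3 → ℝ) : Matrix (Fin 3) (Fin 3) ℝ :=
  diagonal ![φ (y 2), φ (y 2), 1]

def verticalField (f : ℝ → ℝ) (y : Fin 3 → ℝ) : Fin 3 → ℝ := ![0, 0, f (y 2)]

def warpedChristoffel (P Q : ℝ) : Fin 3 → Fin 3 → Fin 3 → ℝ :=
  ![![![0, 0, P], ![0, 0, 0], ![P, 0, 0]],
    ![![0, 0, 0], ![0, 0, P], ![0, P, 0]],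
    ![![Q, 0, 0], ![0, Q, 0], ![0, 0, 0]]]

variable {φ : ℝ → ℝ} {x : Fin 3 → ℝ}

theorem ginv_warpedMetric (hφ : φ (x 2) ≠ 0) :
    ginv (warpedMetric φ) x = diagonal ![(φ (x 2))⁻¹, (φ (x 2))⁻¹, 1] := by
  refine Matrix.inv_eq_left_inv ?_
  rw [warpedMetric, diagonal_mul_diagonal, ← diagonal_one]
  congr 1
  ext k
  fin_cases k <;> simp [hφ]

theorem pd_warpedMetric {d : ℝ} (hφ : HasDerivAt φ d (x 2)) (l j m : Fin 3) :
    pd (fun y => warpedMetric φ y l j) m x = if m = 2 then diagonal ![d, d, 0] l j else 0 := by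
  refine pd_comp_apply (h := fun t => diagonal ![φ t, φ t, 1] l j) ?_ m
  fin_cases l <;> fin_cases j <;> simp [hφ, hasDerivAt_const]

theorem christoffel_warpedMetric {d : ℝ} (hφ : HasDerivAt φ d (x 2)) (h0 : φ (x 2) ≠ 0)
    (k i j : Fin 3) :
    christoffel (warpedMetric φ) k i j x =
      warpedChristoffel (d / (2 * φ (x 2))) (-d / 2) k i j := by
  simp only [christoffel, ginv_warpedMetric h0, pd_warpedMetric hφ, Fin.sum_univ_three]
  fin_cases k <;> fin_cases i <;> fin_cases j <;> simp [warpedChristoffel] <;> field_simp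

theorem hasDerivAt_warpedChristoffel {P Q : ℝ → ℝ} {P' Q' t : ℝ} (hP : HasDerivAt P P' t)
    (hQ : HasDerivAt Q Q' t) (k i j : Fin 3) :
    HasDerivAt (fun s => warpedChristoffel (P s) (Q s) k i j)
      (warpedChristoffel P' Q' k i j) t := by
  fin_cases k <;> fin_cases i <;> fin_cases j <;> simp [warpedChristoffel, hP, hQ, hasDerivAt_const]

theorem ricci_of_christoffel_eq_warped {g : (Fin 3 → ℝ) → Matrix (Fin 3) (Fin 3) ℝ}
    {P Q : ℝ → ℝ} {P' Q' : ℝ}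
    (hΓ : ∀ᶠ y in 𝓝 x, ∀ k i j,
      christoffel g k i j y = warpedChristoffel (P (y 2)) (Q (y 2)) k i j)
    (hP : HasDerivAt P P' (x 2)) (hQ : HasDerivAt Q Q' (x 2)) (i j : Fin 3) :
    ricci g i j x = diagonal ![Q', Q', -2 * P' - 2 * P (x 2) ^ 2] i j := by
  have hpd : ∀ k i j m, pd (christoffel g k i j) m x =
      if m = 2 then warpedChristoffel P' Q' k i j else 0 := fun k i j =>
    pd_of_eventuallyEq_comp (hΓ.mono fun y hy => hy k i j)
      (hasDerivAt_warpedChristoffel hP hQ k i j)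
  simp only [ricci, hpd, hΓ.self_of_nhds, Fin.sum_univ_three]
  fin_cases i <;> fin_cases j <;> simp [warpedChristoffel] <;> ring

theorem ricci_warpedMetric {φ ψ : ℝ → ℝ} {ψ' : ℝ}
    (hφ : ∀ᶠ t in 𝓝 (x 2), HasDerivAt φ (ψ t) t ∧ φ t ≠ 0) (hψ : HasDerivAt ψ ψ' (x 2))
    (i j : Fin 3) :
    ricci (warpedMetric φ) i j x = diagonal ![-ψ' / 2, -ψ' / 2,
      (ψ (x 2) ^ 2 - 2 * ψ' * φ (x 2)) / (2 * φ (x 2) ^ 2)] i j := by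
  obtain ⟨hφx, h0⟩ := hφ.self_of_nhds
  have hΓ : ∀ᶠ y in 𝓝 x, ∀ k i j, christoffel (warpedMetric φ) k i j y =
      warpedChristoffel (ψ (y 2) / (2 * φ (y 2))) (-ψ (y 2) / 2) k i j := by
    filter_upwards [((continuous_apply (2 : Fin 3)).tendsto x).eventually hφ] with y hy
    exact fun k i j => christoffel_warpedMetric (x := y) hy.1 hy.2 k i j
  have hP : HasDerivAt (fun t => ψ t / (2 * φ t))
      ((ψ' * (2 * φ (x 2)) - ψ (x 2) * (2 * ψ (x 2))) / (2 * φ (x 2)) ^ 2) (x 2) :=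
    hψ.fun_div (hφx.const_mul 2) (mul_ne_zero two_ne_zero h0)
  rw [ricci_of_christoffel_eq_warped (P := fun t => ψ t / (2 * φ t)) (Q := fun t => -ψ t / 2)
    hΓ hP (hψ.neg.div_const 2)]
  fin_cases i <;> fin_cases j <;> simp
  field_simp
  ring

theorem lieD_warpedMetric_verticalField {φ f : ℝ → ℝ} {d f' : ℝ}
    (hφ : HasDerivAt φ d (x 2)) (hf : HasDerivAt f f' (x 2)) (i j : Fin 3) :
    lieD (warpedMetric φ) (verticalField f) i j x =
      diagonal ![f (x 2) * d, f (x 2) * d, 2 * f'] i j := by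
  have hE : ∀ k m, pd (fun y => verticalField f y k) m x =
      if m = 2 ∧ k = 2 then f' else 0 := by
    intro k m
    fin_cases k
    · simpa [verticalField] using pd_const (0 : ℝ) m x
    · simpa [verticalField] using pd_const (0 : ℝ) m x
    · simpa [verticalField] using pd_comp_apply hf m
  simp only [lieD, hE, pd_warpedMetric hφ, Fin.sum_univ_three]
  fin_cases i <;> fin_cases j <;> simp [verticalField, warpedMetric]
  ring

end WarpedMetric

section PowerWarping

variable (e : ℝ) {t : ℝ} {x : Fin 3 → ℝ}

theorem lam13_pos (ht : 0 < t) : 0 < lam13 e t := Real.rpow_pos_of_pos ht _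

theorem hasDerivAt_lam13 (ht : 0 < t) :
    HasDerivAt (lam13 e) (e / √2 * lam13 e t / t) t := by
  have h := Real.hasDerivAt_rpow_const (p := e / √2) (Or.inl ht.ne')
  rw [Real.rpow_sub_one ht.ne', ← mul_div_assoc] at h
  exact h

theorem deriv_deriv_lam13 (ht : 0 < t) :
    deriv (deriv (lam13 e)) t = e / √2 * (e / √2 - 1) * lam13 e t / t ^ 2 := by
  have hderiv : deriv (lam13 e) =ᶠ[𝓝 t] fun s => e / √2 * lam13 e s / s := by
    filter_upwards [Ioi_mem_nhds ht] with s hs using (hasDerivAt_lam13 e hs).deriv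
  rw [hderiv.deriv_eq, (((hasDerivAt_lam13 e ht).const_mul _).fun_div (hasDerivAt_id' t)
    ht.ne').deriv]
  field_simp

theorem f13_eq (he : e ≠ 0) (ht : 0 < t) : f13 e t = -(2 * (e / √2) + 1) / t := by
  have hlam := (lam13_pos e ht).ne'
  rw [f13, deriv_deriv_lam13 e ht, (hasDerivAt_lam13 e ht).deriv]
  field_simp
  ring

theorem hasDerivAt_f13 (he : e ≠ 0) (ht : 0 < t) :
    HasDerivAt (f13 e) ((2 * (e / √2) + 1) / t ^ 2) t := by
  have hf : f13 e =ᶠ[𝓝 t] fun s => -(2 * (e / √2) + 1) / s := by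
    filter_upwards [Ioi_mem_nhds ht] with s hs using f13_eq e he hs
  refine ((hasDerivAt_const t _).fun_div (hasDerivAt_id' t) ht.ne').congr_of_eventuallyEq hf
    |>.congr_deriv ?_
  field_simp
  ring

theorem hasDerivAt_lnlam13 (ht : 0 < t) : HasDerivAt (lnlam13 e) (e / √2 / t) t := by
  have h : lnlam13 e =ᶠ[𝓝 t] fun s => e / √2 * Real.log s := by
    filter_upwards [Ioi_mem_nhds ht] with s hs using Real.log_rpow hs _
  exact ((Real.hasDerivAt_log ht.ne').const_mul _).congr_of_eventuallyEq h

theorem deriv_deriv_lnlam13 (ht : 0 < t) :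
    deriv (deriv (lnlam13 e)) t = -(e / √2) / t ^ 2 := by
  have h : deriv (lnlam13 e) =ᶠ[𝓝 t] fun s => e / √2 / s := by
    filter_upwards [Ioi_mem_nhds ht] with s hs using (hasDerivAt_lnlam13 e hs).deriv
  rw [h.deriv_eq, ((hasDerivAt_const t _).fun_div (hasDerivAt_id' t) ht.ne').deriv]
  field_simp
  ring


theorem hasDerivAt_one_div_lam13_sq (ht : 0 < t) :
    HasDerivAt (fun s => 1 / lam13 e s ^ 2) (-2 * (e / √2) / (t * lam13 e t ^ 2)) t := by
  have hlam := (lam13_pos e ht).ne'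
  refine ((hasDerivAt_const t 1).fun_div ((hasDerivAt_lam13 e ht).pow 2) (pow_ne_zero 2 hlam))
    |>.congr_deriv ?_
  simp only [Pi.pow_apply]
  field_simp
  ring

theorem hasDerivAt_deriv_one_div_lam13_sq (ht : 0 < t) :
    HasDerivAt (fun s => -2 * (e / √2) / (s * lam13 e s ^ 2))
      (2 * (e / √2) * (2 * (e / √2) + 1) / (t ^ 2 * lam13 e t ^ 2)) t := by
  have hlam := (lam13_pos e ht).ne'
  refine ((hasDerivAt_const t _).fun_div ((hasDerivAt_id' t).mul
    ((hasDerivAt_lam13 e ht).pow 2)) (mul_ne_zero ht.ne' (pow_ne_zero 2 hlam)))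
    |>.congr_deriv ?_
  simp only [Pi.pow_apply, Pi.mul_apply]
  field_simp
  ring

theorem ricci_g13 (hx : 0 < x 2) (i j : Fin 3) :
    ricci (g13 e) i j x = diagonal ![
      -(e / √2) * (2 * (e / √2) + 1) / (x 2 ^ 2 * lam13 e (x 2) ^ 2),
      -(e / √2) * (2 * (e / √2) + 1) / (x 2 ^ 2 * lam13 e (x 2) ^ 2),
      -2 * (e / √2) * (e / √2 + 1) / x 2 ^ 2] i j := by
  have hφ : ∀ᶠ s in 𝓝 (x 2), HasDerivAt (fun s => 1 / lam13 e s ^ 2)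
      (-2 * (e / √2) / (s * lam13 e s ^ 2)) s ∧ 1 / lam13 e s ^ 2 ≠ 0 := by
    filter_upwards [Ioi_mem_nhds hx] with s hs
    exact ⟨hasDerivAt_one_div_lam13_sq e hs, by have := lam13_pos e hs; positivity⟩
  have hlam := (lam13_pos e hx).ne'
  rw [show g13 e = warpedMetric fun s => 1 / lam13 e s ^ 2 from rfl,
    ricci_warpedMetric hφ (hasDerivAt_deriv_one_div_lam13_sq e hx)]
  fin_cases i <;> fin_cases j <;> simp
  · field_simp
  · field_simp
  · field_simp
    ring

theorem lieD_g13_E13 (he : e ≠ 0) (hx : 0 < x 2) (i j : Fin 3) :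
    lieD (g13 e) (E13 e) i j x = diagonal ![
      2 * (e / √2) * (2 * (e / √2) + 1) / (x 2 ^ 2 * lam13 e (x 2) ^ 2),
      2 * (e / √2) * (2 * (e / √2) + 1) / (x 2 ^ 2 * lam13 e (x 2) ^ 2),
      2 * (2 * (e / √2) + 1) / x 2 ^ 2] i j := by
  rw [show g13 e = warpedMetric fun s => 1 / lam13 e s ^ 2 from rfl,
    show E13 e = verticalField (f13 e) from rfl,
    lieD_warpedMetric_verticalField (hasDerivAt_one_div_lam13_sq e hx)
      (hasDerivAt_f13 e he hx), f13_eq e he hx]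
  fin_cases i <;> fin_cases j <;> simp
  · field_simp
    ring
  · field_simp
    ring
  · ring

end PowerWarping

section Soliton

variable {e : ℝ}

theorem neg_two_mul_ricci_g13_eq_lieD_E13 (he : e ^ 2 = 1) {x : Fin 3 → ℝ} (hx : 0 < x 2)
    (i j : Fin 3) : -2 * ricci (g13 e) i j x = lieD (g13 e) (E13 e) i j x := by
  have he0 : e ≠ 0 := by rintro rfl; norm_num at he
  have hsqrt : √2 ^ 2 = 2 := Real.sq_sqrt zero_le_two
  rw [ricci_g13 e hx, lieD_g13_E13 e he0 hx]
  fin_cases i <;> fin_cases j <;> simp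
  · ring
  · ring
  · field_simp
    linear_combination 2 * he - hsqrt

theorem g13_not_einstein (he : e ≠ 0) :
    ¬ ∃ κ : ℝ, ∀ x : Fin 3 → ℝ, 0 < x 2 → ∀ i j, ricci (g13 e) i j x = κ * g13 e x i j := by
  rintro ⟨κ, hκ⟩
  have h00 := hκ (fun _ => 1) one_pos 0 0
  have h22 := hκ (fun _ => 1) one_pos 2 2
  simp [ricci_g13, g13, lam13] at h00 h22
  have hc : e / √2 = 0 := by linear_combination h00 - h22
  exact he (by simpa using hc)

theorem const_mul_rpow_solves_reduced_ode (C : ℝ) {p : ℝ} (hp : p ^ 2 = 4 * p + 4) {l : ℝ}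
    (hl : 0 < l) :
    let F := fun s : ℝ => C * s ^ p
    2 * l ^ 2 * F l * deriv (deriv F) l - l * deriv F l * (2 * F l + l * deriv F l)
      - 4 * F l ^ 2 = 0 := by
  simp only [deriv_const_mul_field', Real.deriv_rpow_const', Real.rpow_sub_one hl.ne']
  field_simp
  linear_combination C ^ 2 * (l ^ p) ^ 2 * hp

end Soliton

/-- The warped product metric `(dx²+dy²)/λ(t)² + dt²` with
`λ(t) = t^{±1/√2}` on `N² × (0,∞)`, `K^N = 0`, is a stationary Ricci soliton (`A = 0`) of
non-constant curvature; the soliton equations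
`0 = (ln λ)'' − 2((ln λ)')² − f (ln λ)'` and `0 = f' + 2(ln λ)'' − 2((ln λ)')²` hold, and
`F(λ) = 2λ^{2(1±√2)}` solves `2λ²FF'' − λF'(2F + λF') − 4F² = 0`. -/
theorem warped_product_stationary_soliton (e : ℝ) (he : e = 1 ∨ e = -1) :
    -- stationary Ricci soliton: `−2 Ricci(g) = L_E g` (A = 0)
    (∀ x : Fin 3 → ℝ, 0 < x 2 → ∀ i j,
      -2 * ricci (g13 e) i j x = lieD (g13 e) (E13 e) i j x) ∧
    -- the warped-product soliton equations
    (∀ t : ℝ, 0 < t →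
      deriv (deriv (lnlam13 e)) t - 2 * (deriv (lnlam13 e) t) ^ 2
          - f13 e t * deriv (lnlam13 e) t = 0 ∧
      deriv (f13 e) t + 2 * deriv (deriv (lnlam13 e)) t
          - 2 * (deriv (lnlam13 e) t) ^ 2 = 0) ∧
    -- non-constant (sectional) curvature: the metric is not Einstein, i.e. in dimension 3
    -- not of constant curvature
    (¬ ∃ c : ℝ, ∀ x : Fin 3 → ℝ, 0 < x 2 → ∀ i j,
        ricci (g13 e) i j x = c * g13 e x i j) ∧
    -- `F(λ) = 2λ^{2(1±√2)}` solves the reduced ODE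
    (∀ l : ℝ, 0 < l →
      2 * l ^ 2 * F13 e l * deriv (deriv (F13 e)) l
          - l * deriv (F13 e) l * (2 * F13 e l + l * deriv (F13 e) l)
          - 4 * (F13 e l) ^ 2 = 0) := by
  have he2 : e ^ 2 = 1 := by rcases he with rfl | rfl <;> norm_num
  have he0 : e ≠ 0 := by rintro rfl; norm_num at he2
  have hsqrt : √2 ^ 2 = 2 := Real.sq_sqrt zero_le_two
  refine ⟨fun x hx => neg_two_mul_ricci_g13_eq_lieD_E13 he2 hx, fun t ht => ?_,
    g13_not_einstein he0, fun l hl => const_mul_rpow_solves_reduced_ode 2 ?_ hl⟩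
  · rw [deriv_deriv_lnlam13 e ht, (hasDerivAt_lnlam13 e ht).deriv, f13_eq e he0 ht,
      (hasDerivAt_f13 e he0 ht).deriv]
    constructor
    · field_simp
      ring
    · field_simp
      linear_combination hsqrt - 2 * he2
  · linear_combination 8 * he2 + 4 * e ^ 2 * hsqrt
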